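/- Let κ be an uncountable strong limit cardinal of countable cofinality. For every set A ⊆ κ^ω the following are equivalent: (i) the cardinality of A is at most κ, or there is a topological embedding ι : κ^ω → κ^ω whose range is a closed subset of κ^ω contained in A; (ii) the cardinality of A is at most κ, or there is a continuous injection ι : κ^ω → κ^ω whose range is contained in A; (iii) the cardinality of A is at most κ, or A contains a κ-perfect subset. (An instance of Fact 2.2, with the generalized Baire space κ^ω as the canonical κ-Polish space.) -/

import Mathlib

noncomputable section
open Cardinal Set

/-- The ordinal below `o` corresponding to an element of the order type `o.ToType`. -/
def ordinalOf {o : Ordinal} (x : o.ToType) : Ordinal :=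
  ((Ordinal.ToType.mk (o := o)).symm x : Set.Iio o).1

/-- Each ordinal's order type carries the discrete topology; the generalized Baire
space `κ^ω = ℕ → κ.ord.ToType` then carries the product topology. -/
instance (o : Ordinal) : TopologicalSpace o.ToType := ⊥

/-- A subset of the generalized Baire space `κ^ω` is `κ`-perfect if it is nonempty,
closed, and every open neighborhood of each of its points meets it in a set of
cardinality at least `κ`. -/
def IsKappaPerfect (κ : Cardinal) (P : Set (ℕ → κ.ord.ToType)) : Prop :=
  P.Nonempty ∧ IsClosed P ∧
    ∀ x ∈ P, ∀ U : Set (ℕ → κ.ord.ToType), IsOpen U → x ∈ U → κ ≤ #(P ∩ U : Set _)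

/-- A set `A ⊆ κ^ω` has the `κ`-perfect set property if either `|A| ≤ κ` or `A`
contains a `κ`-perfect subset. -/
def HasKappaPSP (κ : Cardinal) (A : Set (ℕ → κ.ord.ToType)) : Prop :=
  #A ≤ κ ∨ ∃ P ⊆ A, IsKappaPerfect κ P

/-! ### Auxiliary development -/

universe u

instance (o : Ordinal) : DiscreteTopology o.ToType := ⟨rfl⟩

namespace KPSP

/-! #### Cylinders -/

section Cyl

variable {β : Type u}

/-- The basic clopen cylinder of all sequences agreeing with `y` below `m`. -/
def cyl (y : ℕ → β) (m : ℕ) : Set (ℕ → β) := {z | ∀ i < m, z i = y i}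

theorem mem_cyl_self (y : ℕ → β) (m : ℕ) : y ∈ cyl y m := fun _ _ => rfl

theorem cyl_antitone {y : ℕ → β} {m m' : ℕ} (h : m ≤ m') : cyl y m' ⊆ cyl y m :=
  fun _ hz i hi => hz i (lt_of_lt_of_le hi h)

theorem isOpen_cyl [TopologicalSpace β] [DiscreteTopology β] (y : ℕ → β) (m : ℕ) :
    IsOpen (cyl y m) := by
  induction m with
  | zero =>
    have : cyl y 0 = Set.univ := by
      ext z; simp [cyl]
    rw [this]; exact isOpen_univ
  | succ m ih =>
    have : cyl y (m + 1) = cyl y m ∩ (fun z : ℕ → β => z m) ⁻¹' {y m} := by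
      ext z
      simp only [cyl, mem_setOf_eq, mem_inter_iff, mem_preimage, mem_singleton_iff]
      constructor
      · exact fun h => ⟨fun i hi => h i (hi.trans (Nat.lt_succ_self m)), h m (Nat.lt_succ_self m)⟩
      · rintro ⟨h1, h2⟩ i hi
        rcases Nat.lt_succ_iff_lt_or_eq.mp hi with h | h
        · exact h1 i h
        · rw [h]; exact h2
    rw [this]
    exact ih.inter ((continuous_apply m).isOpen_preimage _ (isOpen_discrete _))

theorem exists_cyl_subset [TopologicalSpace β] [DiscreteTopology β] {U : Set (ℕ → β)}
    (hU : IsOpen U) {x : ℕ → β} (hx : x ∈ U) : ∃ m, cyl x m ⊆ U := by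
  rcases (isOpen_pi_iff.mp hU) x hx with ⟨I, u, hI, hsub⟩
  refine ⟨(I.sup id) + 1, fun z hz => hsub (fun i hi => ?_)⟩
  have : z i = x i := hz i (Nat.lt_succ_of_le (Finset.le_sup (f := id) hi))
  rw [this]; exact (hI i hi).2

/-- `κ` many points inside any cylinder, provided the alphabet has at least `κ` points. -/
theorem kappa_le_mk_cyl {κ : Cardinal.{u}} (hβ : κ ≤ #β) (y : ℕ → β) (m : ℕ) :
    κ ≤ #(cyl y m) := by
  refine hβ.trans (Cardinal.mk_le_of_injective (f := fun b : β =>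
    (⟨fun i => if i < m then y i else b, fun i hi => if_pos hi⟩ : cyl y m)) ?_)
  intro b b' h
  have := congrArg (fun z : cyl y m => (z : ℕ → β) m) h
  simpa using this

/-! #### The counting lemma -/

/-- Truncation of a sequence at `m`, with tail `d`. -/
def trunc (d : β) (m : ℕ) (x : ℕ → β) : ℕ → β := fun i => if i < m then x i else d

theorem exists_big_level (d : β) {lam : Cardinal.{u}} (hlam : ℵ₀ ≤ lam)
    {S : Set (ℕ → β)} (hbig : 2 ^ lam < #S) (m₀ : ℕ) :
    ∃ m, m₀ < m ∧ lam < #(trunc d m '' S) := by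
  by_contra hcon
  push_neg at hcon
  have key : #S ≤ 2 ^ lam := by
    have Φinj : Function.Injective (fun (x : S) (j : ULift.{u} ℕ) =>
        (⟨trunc d (m₀ + j.down + 1) x, mem_image_of_mem _ x.2⟩ :
          trunc d (m₀ + j.down + 1) '' S)) := by
      intro x x' h
      apply Subtype.ext
      funext i
      have h1 := congrFun h (ULift.up i)
      have h2 := congrArg Subtype.val h1
      have h3 := congrFun h2 i
      simpa [trunc, Nat.lt_succ_of_le (Nat.le_add_left i m₀)] using h3
    have h1 : #S ≤ #(∀ j : ULift.{u} ℕ, trunc d (m₀ + j.down + 1) '' S) :=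
      Cardinal.mk_le_of_injective Φinj
    have h2 : #(∀ j : ULift.{u} ℕ, (trunc d (m₀ + j.down + 1) '' S : Set (ℕ → β))) =
        Cardinal.prod (fun j : ULift.{u} ℕ => #(trunc d (m₀ + j.down + 1) '' S)) :=
      Cardinal.mk_pi _
    have h3 : Cardinal.prod (fun j : ULift.{u} ℕ => #(trunc d (m₀ + j.down + 1) '' S)) ≤
        Cardinal.prod (fun _ : ULift.{u} ℕ => lam) :=
      Cardinal.prod_le_prod _ _ (fun j => hcon _ (Nat.lt_succ_of_le (Nat.le_add_right m₀ j.down)))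
    have h4 : Cardinal.prod (fun _ : ULift.{u} ℕ => lam) = lam ^ (ℵ₀ : Cardinal.{u}) := by
      have hn : #(ULift.{u} ℕ) = (ℵ₀ : Cardinal.{u}) := by
        rw [Cardinal.mk_uLift, Cardinal.mk_nat, Cardinal.lift_aleph0]
      rw [Cardinal.prod_const', hn]
    have h5 : lam ^ (ℵ₀ : Cardinal.{u}) ≤ 2 ^ lam := by
      calc lam ^ (ℵ₀ : Cardinal.{u}) ≤ (2 ^ lam) ^ (ℵ₀ : Cardinal.{u}) :=
            Cardinal.power_le_power_right (Cardinal.cantor lam).le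
        _ = 2 ^ (lam * ℵ₀) := by rw [← Cardinal.power_mul]
        _ = 2 ^ lam := by rw [Cardinal.mul_eq_left hlam hlam Cardinal.aleph0_ne_zero]
    calc #S ≤ _ := h1
      _ = _ := h2
      _ ≤ _ := h3
      _ = _ := h4
      _ ≤ _ := h5
  exact absurd (lt_of_lt_of_le hbig key) (lt_irrefl _)

end Cyl

/-! #### The context structure bundling all data -/

structure Ctx : Type (u + 1) where
  κ : Cardinal.{u}
  huncount : ℵ₀ < κ
  hsl : ∀ c < κ, 2 ^ c < κ
  kap : ℕ → Cardinal.{u}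
  hmono : Monotone kap
  hk0 : ∀ n, ℵ₀ ≤ kap n
  hkk : ∀ n, kap n < κ
  hksup : ∀ c, c < κ → ∃ n, c ≤ kap n
  S : ℕ → Set κ.ord.ToType
  hS : ∀ n, #(S n) = kap n
  W : Set (ℕ → κ.ord.ToType)
  hWne : W.Nonempty
  hWcl : IsClosed W
  f : (ℕ → κ.ord.ToType) → (ℕ → κ.ord.ToType)
  hf : Continuous f
  hbig : ∀ y m, (W ∩ cyl y m).Nonempty → κ ≤ #(f '' (W ∩ cyl y m))

namespace Ctx

variable (C : Ctx.{u})

abbrev R : Type u := C.κ.ord.ToType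

abbrev X : Type u := ℕ → C.R

/-- The "product of the `S n`" subset of the Baire space. -/
def Z : Set C.X := {b | ∀ n, b n ∈ C.S n}

theorem mk_R : #C.R = C.κ := by
  rw [Cardinal.mk_toType, Cardinal.card_ord]

theorem R_nonempty : Nonempty C.R := by
  rw [← Cardinal.mk_ne_zero_iff, C.mk_R]
  exact ne_of_gt (lt_trans Cardinal.aleph0_pos C.huncount)

/-- A default element of the alphabet. -/
def d : C.R := Classical.choice C.R_nonempty

theorem S_nonempty (n : ℕ) : (C.S n).Nonempty := by
  rw [← Set.nonempty_coe_sort, ← Cardinal.mk_ne_zero_iff, C.hS n]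
  exact ne_of_gt (lt_of_lt_of_le Cardinal.aleph0_pos (C.hk0 n))

theorem Z_nonempty : C.Z.Nonempty :=
  ⟨fun n => (C.S_nonempty n).choose, fun n => (C.S_nonempty n).choose_spec⟩

/-! #### The scheme recursion -/

/-- States: a target node `(point, length)` and a domain node `(point, length)`. -/
abbrev St := (C.X × ℕ) × (C.X × ℕ)

/-- The invariant maintained by the scheme recursion. -/
def Inv (n : ℕ) (st : C.St) : Prop :=
  st.2.1 ∈ C.W ∧ (C.f '' (C.W ∩ cyl st.2.1 st.2.2) ⊆ cyl st.1.1 st.1.2) ∧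
    n ≤ st.1.2 ∧ n ≤ st.2.2

theorem step_ex (n : ℕ) (st : C.St) (h : C.Inv n st) :
    ∃ (F : C.R → C.St) (ℓ : ℕ),
      st.1.2 < ℓ ∧
      (∀ α, C.Inv (n + 1) (F α)) ∧
      (∀ α, (F α).1.2 = ℓ) ∧
      (∀ α, ∀ i < st.1.2, (F α).1.1 i = st.1.1 i) ∧
      (∀ α, ∀ i < st.2.2, (F α).2.1 i = st.2.1 i) ∧
      (∀ α, st.2.2 < (F α).2.2) ∧
      (∀ α β', α ∈ C.S n → β' ∈ C.S n → α ≠ β' →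
        ∃ i < ℓ, (F α).1.1 i ≠ (F β').1.1 i) := by
  classical
  have hne : (C.W ∩ cyl st.2.1 st.2.2).Nonempty := ⟨st.2.1, h.1, mem_cyl_self _ _⟩
  have hT : C.κ ≤ #(C.f '' (C.W ∩ cyl st.2.1 st.2.2)) := C.hbig _ _ hne
  have h2 : 2 ^ C.kap n < #(C.f '' (C.W ∩ cyl st.2.1 st.2.2)) :=
    lt_of_lt_of_le (C.hsl _ (C.hkk n)) hT
  obtain ⟨m, hm, hcard⟩ := exists_big_level C.d (C.hk0 n) h2 (max st.1.2 n)
  have hle : #(C.S n) ≤ #(trunc C.d m '' (C.f '' (C.W ∩ cyl st.2.1 st.2.2))) := by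
    rw [C.hS n]; exact hcard.le
  obtain ⟨g⟩ := (Cardinal.le_def _ _).mp hle
  have wit : ∀ ξ : C.S n, ∃ x, x ∈ C.W ∧ x ∈ cyl st.2.1 st.2.2 ∧
      trunc C.d m (C.f x) = (g ξ : ℕ → C.R) := by
    intro ξ
    obtain ⟨y, hyT, hy⟩ := (g ξ).2
    obtain ⟨x, hx, rfl⟩ := hyT
    exact ⟨x, hx.1, hx.2, hy⟩
  choose xw hxW hxcyl hxtr using wit
  have lw : ∀ ξ : C.S n, ∃ l, st.2.2 < l ∧ n + 1 ≤ l ∧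
      ∀ z ∈ cyl (xw ξ) l, C.f z ∈ cyl (C.f (xw ξ)) m := by
    intro ξ
    have hop : IsOpen (C.f ⁻¹' cyl (C.f (xw ξ)) m) := (isOpen_cyl _ _).preimage C.hf
    have hmm : xw ξ ∈ C.f ⁻¹' cyl (C.f (xw ξ)) m := mem_cyl_self _ _
    obtain ⟨l0, hl0⟩ := exists_cyl_subset hop hmm
    refine ⟨max l0 (max (st.2.2 + 1) (n + 1)), ?_, ?_, ?_⟩
    · exact lt_of_lt_of_le (Nat.lt_succ_self _) (le_trans (le_max_left _ _) (le_max_right _ _))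
    · exact le_trans (le_max_right _ _) (le_max_right _ _)
    · intro z hz
      exact hl0 (cyl_antitone (le_max_left _ _) hz)
  choose lv hlv1 hlv2 hlv3 using lw
  have hSne := C.S_nonempty n
  let ξof : C.R → C.S n := fun α =>
    if hα : α ∈ C.S n then ⟨α, hα⟩ else ⟨hSne.choose, hSne.choose_spec⟩
  have hξ : ∀ (α : C.R) (hα : α ∈ C.S n), ξof α = ⟨α, hα⟩ := by
    intro α hα
    simp only [ξof]
    rw [dif_pos hα]
  have hnm : n < m := lt_of_le_of_lt (le_max_right _ _) hm
  refine ⟨fun α => ((C.f (xw (ξof α)), m), (xw (ξof α), lv (ξof α))), m,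
    lt_of_le_of_lt (le_max_left _ _) hm, ?_, fun α => rfl, ?_, ?_, fun α => hlv1 _, ?_⟩
  · intro α
    refine ⟨hxW _, ?_, Nat.succ_le_of_lt hnm, hlv2 _⟩
    rintro y ⟨z, hz, rfl⟩
    exact hlv3 _ z hz.2
  · intro α i hi
    have : C.f (xw (ξof α)) ∈ cyl st.1.1 st.1.2 := h.2.1 ⟨xw _, ⟨hxW _, hxcyl _⟩, rfl⟩
    exact this i hi
  · intro α i hi
    exact hxcyl _ i hi
  · intro α β' hα hβ' hne'
    have e1 : ξof α = ⟨α, hα⟩ := hξ α hα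
    have e2 : ξof β' = ⟨β', hβ'⟩ := hξ β' hβ'
    have hgg : g (ξof α) ≠ g (ξof β') := by
      intro hc
      apply hne'
      have := g.injective hc
      rw [e1, e2] at this
      exact congrArg Subtype.val this
    have htr : trunc C.d m (C.f (xw (ξof α))) ≠ trunc C.d m (C.f (xw (ξof β'))) := by
      rw [hxtr, hxtr]
      exact fun hc => hgg (Subtype.ext hc)
    obtain ⟨i, hi⟩ := Function.ne_iff.mp htr
    by_cases him : i < m
    · refine ⟨i, him, ?_⟩
      simpa [trunc, him] using hi
    · exact absurd (by simp [trunc, him]) hi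

open scoped Classical in
/-- One recursion step: the chosen family of children together with the common length. -/
def step (n : ℕ) (st : C.St) : (C.R → C.St) × ℕ :=
  if h : C.Inv n st then
    ⟨(C.step_ex n st h).choose, (C.step_ex n st h).choose_spec.choose⟩
  else ⟨fun _ => st, 0⟩

open scoped Classical in
theorem step_spec (n : ℕ) (st : C.St) (h : C.Inv n st) :
    st.1.2 < (C.step n st).2 ∧
    (∀ α, C.Inv (n + 1) ((C.step n st).1 α)) ∧
    (∀ α, ((C.step n st).1 α).1.2 = (C.step n st).2) ∧
    (∀ α, ∀ i < st.1.2, ((C.step n st).1 α).1.1 i = st.1.1 i) ∧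
    (∀ α, ∀ i < st.2.2, ((C.step n st).1 α).2.1 i = st.2.1 i) ∧
    (∀ α, st.2.2 < ((C.step n st).1 α).2.2) ∧
    (∀ α β', α ∈ C.S n → β' ∈ C.S n → α ≠ β' →
      ∃ i < (C.step n st).2, ((C.step n st).1 α).1.1 i ≠ ((C.step n st).1 β').1.1 i) := by
  rw [step, dif_pos h]
  exact (C.step_ex n st h).choose_spec.choose_spec

/-- The root state. -/
def root : C.St := ((fun _ => C.d, 0), (C.hWne.choose, 0))

theorem root_inv : C.Inv 0 C.root := by
  refine ⟨C.hWne.choose_spec, ?_, Nat.zero_le _, Nat.zero_le _⟩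
  rintro y -
  intro i hi
  exact absurd hi (Nat.not_lt_zero i)

/-- The scheme: the state above the prefix `b ↾ n`. -/
def G (b : C.X) : ℕ → C.St
  | 0 => C.root
  | n + 1 => (C.step n (G b n)).1 (b n)

theorem G_succ (b : C.X) (n : ℕ) : C.G b (n + 1) = (C.step n (C.G b n)).1 (b n) := rfl

theorem G_inv (b : C.X) : ∀ n, C.Inv n (C.G b n) := by
  intro n
  induction n with
  | zero => exact C.root_inv
  | succ n ih =>
    rw [C.G_succ b n]
    exact (C.step_spec n (C.G b n) ih).2.1 (b n)

/-- Accessors. -/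
def ypt (b : C.X) (n : ℕ) : C.X := (C.G b n).1.1
def ylen (b : C.X) (n : ℕ) : ℕ := (C.G b n).1.2
def vpt (b : C.X) (n : ℕ) : C.X := (C.G b n).2.1
def vlen (b : C.X) (n : ℕ) : ℕ := (C.G b n).2.2

theorem ylen_step (b : C.X) (n : ℕ) :
    C.ylen b (n + 1) = (C.step n (C.G b n)).2 := by
  rw [ylen, C.G_succ b n]
  exact (C.step_spec n (C.G b n) (C.G_inv b n)).2.2.1 (b n)

theorem ylen_lt (b : C.X) (n : ℕ) : C.ylen b n < C.ylen b (n + 1) := by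
  rw [C.ylen_step b n]
  exact (C.step_spec n (C.G b n) (C.G_inv b n)).1

theorem ylen_mono (b : C.X) : Monotone (C.ylen b) :=
  monotone_nat_of_le_succ (fun n => (C.ylen_lt b n).le)

theorem le_ylen (b : C.X) (n : ℕ) : n ≤ C.ylen b n := (C.G_inv b n).2.2.1

theorem le_vlen (b : C.X) (n : ℕ) : n ≤ C.vlen b n := (C.G_inv b n).2.2.2

theorem vlen_lt (b : C.X) (n : ℕ) : C.vlen b n < C.vlen b (n + 1) := by
  show (C.G b n).2.2 < ((C.step n (C.G b n)).1 (b n)).2.2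
  exact (C.step_spec n (C.G b n) (C.G_inv b n)).2.2.2.2.2.1 (b n)

theorem vlen_mono (b : C.X) : Monotone (C.vlen b) :=
  monotone_nat_of_le_succ (fun n => (C.vlen_lt b n).le)

theorem ypt_extends (b : C.X) (n : ℕ) :
    ∀ i < C.ylen b n, C.ypt b (n + 1) i = C.ypt b n i := by
  intro i hi
  rw [ypt, C.G_succ b n]
  exact (C.step_spec n (C.G b n) (C.G_inv b n)).2.2.2.1 (b n) i hi

theorem vpt_extends (b : C.X) (n : ℕ) :
    ∀ i < C.vlen b n, C.vpt b (n + 1) i = C.vpt b n i := by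
  intro i hi
  rw [vpt, C.G_succ b n]
  exact (C.step_spec n (C.G b n) (C.G_inv b n)).2.2.2.2.1 (b n) i hi

theorem ypt_stable (b : C.X) {n n' : ℕ} (h : n ≤ n') :
    ∀ i < C.ylen b n, C.ypt b n' i = C.ypt b n i := by
  induction n' with
  | zero =>
    have : n = 0 := Nat.le_zero.mp h
    subst this
    intro i hi
    rfl
  | succ n' ih =>
    rcases eq_or_lt_of_le h with rfl | hlt
    · intro i hi; rfl
    · have hn : n ≤ n' := Nat.lt_succ_iff.mp hlt
      intro i hi
      have h1 : C.ypt b (n' + 1) i = C.ypt b n' i :=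
        C.ypt_extends b n' i (lt_of_lt_of_le hi (C.ylen_mono b hn))
      rw [h1]
      exact ih hn i hi

theorem vpt_stable (b : C.X) {n n' : ℕ} (h : n ≤ n') :
    ∀ i < C.vlen b n, C.vpt b n' i = C.vpt b n i := by
  induction n' with
  | zero =>
    have : n = 0 := Nat.le_zero.mp h
    subst this
    intro i hi
    rfl
  | succ n' ih =>
    rcases eq_or_lt_of_le h with rfl | hlt
    · intro i hi; rfl
    · have hn : n ≤ n' := Nat.lt_succ_iff.mp hlt
      intro i hi
      have h1 : C.vpt b (n' + 1) i = C.vpt b n' i :=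
        C.vpt_extends b n' i (lt_of_lt_of_le hi (C.vlen_mono b hn))
      rw [h1]
      exact ih hn i hi

theorem G_prefix {b b' : C.X} : ∀ {n : ℕ}, (∀ i < n, b i = b' i) → C.G b n = C.G b' n := by
  intro n
  induction n with
  | zero => intro _; rfl
  | succ n ih =>
    intro h
    rw [C.G_succ b n, C.G_succ b' n, ih (fun i hi => h i (hi.trans (Nat.lt_succ_self n))),
      h n (Nat.lt_succ_self n)]

/-- The branch function. -/
def eF (b : C.X) : C.X := fun i => C.ypt b (i + 1) i

/-- The domain branch point. -/
def xF (b : C.X) : C.X := fun i => C.vpt b (i + 1) i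

theorem eF_in_cyl (b : C.X) (n : ℕ) : C.eF b ∈ cyl (C.ypt b n) (C.ylen b n) := by
  intro i hi
  show C.ypt b (i + 1) i = C.ypt b n i
  have h1 : C.ypt b (max (i + 1) n) i = C.ypt b (i + 1) i :=
    C.ypt_stable b (le_max_left _ _) i
      (lt_of_lt_of_le (Nat.lt_succ_self i) (C.le_ylen b (i + 1)))
  have h2 : C.ypt b (max (i + 1) n) i = C.ypt b n i :=
    C.ypt_stable b (le_max_right _ _) i hi
  rw [← h1, h2]

theorem xF_in_cyl (b : C.X) (n : ℕ) : C.xF b ∈ cyl (C.vpt b n) (C.vlen b n) := by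
  intro i hi
  show C.vpt b (i + 1) i = C.vpt b n i
  have h1 : C.vpt b (max (i + 1) n) i = C.vpt b (i + 1) i :=
    C.vpt_stable b (le_max_left _ _) i
      (lt_of_lt_of_le (Nat.lt_succ_self i) (C.le_vlen b (i + 1)))
  have h2 : C.vpt b (max (i + 1) n) i = C.vpt b n i :=
    C.vpt_stable b (le_max_right _ _) i hi
  rw [← h1, h2]

theorem xF_mem_W (b : C.X) : C.xF b ∈ C.W := by
  rw [← C.hWcl.closure_eq]
  rw [mem_closure_iff]
  intro o ho hxo
  obtain ⟨M, hM⟩ := exists_cyl_subset ho hxo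
  refine ⟨C.vpt b M, hM ?_, (C.G_inv b M).1⟩
  intro i hi
  exact (C.xF_in_cyl b M i (lt_of_lt_of_le hi (C.le_vlen b M))).symm

theorem f_xF (b : C.X) : C.f (C.xF b) = C.eF b := by
  funext i
  have hi : i < C.ylen b (i + 1) := lt_of_lt_of_le (Nat.lt_succ_self i) (C.le_ylen b (i + 1))
  have h1 : C.f (C.xF b) ∈ cyl (C.ypt b (i + 1)) (C.ylen b (i + 1)) :=
    (C.G_inv b (i + 1)).2.1 ⟨C.xF b, ⟨C.xF_mem_W b, C.xF_in_cyl b (i + 1)⟩, rfl⟩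
  have h2 : C.eF b i = C.ypt b (i + 1) i := C.eF_in_cyl b (i + 1) i hi
  rw [h2]
  exact h1 i hi

theorem eF_mem (b : C.X) : C.eF b ∈ C.f '' C.W := ⟨C.xF b, C.xF_mem_W b, C.f_xF b⟩

theorem ylen_congr {b b' : C.X} {n : ℕ} (h : ∀ i < n, b i = b' i) :
    C.ylen b n = C.ylen b' n := by
  rw [ylen, ylen, C.G_prefix h]

theorem sib {b b' : C.X} {n : ℕ} (hb : b n ∈ C.S n) (hb' : b' n ∈ C.S n)
    (hpre : ∀ i < n, b i = b' i) (hne : b n ≠ b' n) :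
    ∃ i < C.ylen b (n + 1), C.eF b i ≠ C.eF b' i := by
  have hG : C.G b n = C.G b' n := C.G_prefix hpre
  obtain ⟨i, hi, hdiff⟩ :=
    (C.step_spec n (C.G b n) (C.G_inv b n)).2.2.2.2.2.2 (b n) (b' n) hb hb' hne
  have hstep : C.ylen b (n + 1) = (C.step n (C.G b n)).2 := C.ylen_step b n
  have hstep' : C.ylen b' (n + 1) = (C.step n (C.G b n)).2 := by
    rw [C.ylen_step b' n, hG]
  refine ⟨i, by rw [hstep]; exact hi, ?_⟩
  have e1 : C.eF b i = C.ypt b (n + 1) i := C.eF_in_cyl b (n + 1) i (by rw [hstep]; exact hi)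
  have e2 : C.eF b' i = C.ypt b' (n + 1) i := C.eF_in_cyl b' (n + 1) i (by rw [hstep']; exact hi)
  rw [e1, e2]
  have hy1 : C.ypt b (n + 1) i = ((C.step n (C.G b n)).1 (b n)).1.1 i := by
    rw [ypt, C.G_succ b n]
  have hy2 : C.ypt b' (n + 1) i = ((C.step n (C.G b n)).1 (b' n)).1.1 i := by
    rw [ypt, C.G_succ b' n, hG]
  rw [hy1, hy2]
  exact hdiff

theorem eF_injOn {b b' : C.X} (hb : b ∈ C.Z) (hb' : b' ∈ C.Z) (h : C.eF b = C.eF b') :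
    b = b' := by
  by_contra hne
  have hex : ∃ n, b n ≠ b' n := by
    by_contra hc
    push_neg at hc
    exact hne (funext hc)
  classical
  let n := Nat.find hex
  have hpre : ∀ i < n, b i = b' i := fun i hi => by
    by_contra hc
    exact absurd (Nat.find_min hex hi) (by simp [hc])
  obtain ⟨i, _, hdiff⟩ := C.sib (hb n) (hb' n) hpre (Nat.find_spec hex)
  exact hdiff (congrFun h i)

theorem recov {b b' : C.X} (hb : b ∈ C.Z) (hb' : b' ∈ C.Z) {n : ℕ}
    (hc : C.eF b' ∈ cyl (C.eF b) (C.ylen b n)) : ∀ i < n, b' i = b i := by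
  by_contra hcon
  push_neg at hcon
  classical
  have hex : ∃ k, k < n ∧ b' k ≠ b k := hcon
  let k := Nat.find hex
  have hk := Nat.find_spec hex
  have hpre : ∀ i < k, b i = b' i := by
    intro i hi
    by_contra hne
    exact absurd (Nat.find_min hex hi) (by simp [lt_trans hi hk.1, Ne.symm hne] )
  obtain ⟨i, hiℓ, hdiff⟩ := C.sib (hb k) (hb' k) hpre (Ne.symm hk.2)
  have : i < C.ylen b n := lt_of_lt_of_le hiℓ (C.ylen_mono b hk.1)
  exact hdiff (hc i this).symm

theorem eF_cont : Continuous C.eF := by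
  apply continuous_pi
  intro i
  rw [continuous_iff_continuousAt]
  intro b
  have hev : ∀ᶠ b' in nhds b, C.eF b' i = C.eF b i := by
    refine Filter.eventually_of_mem ((isOpen_cyl b (i + 1)).mem_nhds (mem_cyl_self b (i + 1))) ?_
    intro b' hb'
    show C.ypt b' (i + 1) i = C.ypt b (i + 1) i
    rw [ypt, ypt, C.G_prefix (fun j hj => hb' j hj)]
  exact Filter.EventuallyEq.continuousAt hev

theorem closed_image : IsClosed (C.eF '' C.Z) := by
  refine isClosed_of_closure_subset ?_
  intro y hy
  have sel : ∀ M : ℕ, ∃ b, b ∈ C.Z ∧ ∀ i < M, C.eF b i = y i := by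
    intro M
    obtain ⟨w, hw1, b, hbZ, rfl⟩ :=
      mem_closure_iff.mp hy (cyl y M) (isOpen_cyl y M) (mem_cyl_self y M)
    exact ⟨b, hbZ, fun i hi => hw1 i hi⟩
  choose bb hbbZ hbb using sel
  let τ : ℕ → ℕ := fun n => Nat.rec 0 (fun n t => max t (C.ylen (bb t) (n + 1))) n
  have hτ : ∀ n, τ (n + 1) = max (τ n) (C.ylen (bb (τ n)) (n + 1)) := fun n => rfl
  have τmono : Monotone τ := monotone_nat_of_le_succ (fun n => by rw [hτ]; exact le_max_left _ _)
  have Q : ∀ n, ∀ M, τ n ≤ M → ∀ M', τ n ≤ M' → ∀ i < n, bb M i = bb M' i := by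
    intro n
    induction n with
    | zero => intro M _ M' _ i hi; exact absurd hi (Nat.not_lt_zero i)
    | succ n ih =>
      intro M hM M' hM' i hi
      have hMn : τ n ≤ M := le_trans (le_trans (le_max_left _ _) (hτ n).symm.le) hM
      have hMn' : τ n ≤ M' := le_trans (le_trans (le_max_left _ _) (hτ n).symm.le) hM'
      have hpM : ∀ j < n, bb M j = bb (τ n) j := fun j hj => ih M hMn (τ n) le_rfl j hj
      have hpM' : ∀ j < n, bb M' j = bb (τ n) j := fun j hj => ih M' hMn' (τ n) le_rfl j hj
      have eqGM : C.G (bb M) n = C.G (bb (τ n)) n := C.G_prefix hpM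
      have eqGM' : C.G (bb M') n = C.G (bb (τ n)) n := C.G_prefix hpM'
      have hlM : C.ylen (bb M) (n + 1) = C.ylen (bb (τ n)) (n + 1) := by
        rw [C.ylen_step, C.ylen_step, eqGM]
      have hℓM : C.ylen (bb (τ n)) (n + 1) ≤ M :=
        le_trans (le_trans (le_max_right _ _) (hτ n).symm.le) hM
      have hℓM' : C.ylen (bb (τ n)) (n + 1) ≤ M' :=
        le_trans (le_trans (le_max_right _ _) (hτ n).symm.le) hM'
      have hcyl : C.eF (bb M') ∈ cyl (C.eF (bb M)) (C.ylen (bb M) (n + 1)) := by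
        rw [hlM]
        intro j hj
        calc C.eF (bb M') j = y j := hbb M' j (lt_of_lt_of_le hj hℓM')
          _ = C.eF (bb M) j := (hbb M j (lt_of_lt_of_le hj hℓM)).symm
      have hrec := C.recov (hbbZ M) (hbbZ M') hcyl
      exact (hrec i hi).symm
  let b : C.X := fun i => bb (τ (i + 1)) i
  have hbZ : b ∈ C.Z := fun i => hbbZ (τ (i + 1)) i
  refine ⟨b, hbZ, ?_⟩
  funext i
  have hpre : ∀ j < i + 1, b j = bb (max (τ (i + 1)) (i + 1)) j := by
    intro j hj
    exact Q (j + 1) (τ (j + 1)) le_rfl (max (τ (i + 1)) (i + 1))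
      (le_trans (τmono hj) (le_max_left _ _)) j (Nat.lt_succ_self j)
  have eqG : C.G b (i + 1) = C.G (bb (max (τ (i + 1)) (i + 1))) (i + 1) := C.G_prefix hpre
  have h1 : C.eF b i = C.eF (bb (max (τ (i + 1)) (i + 1))) i := by
    show C.ypt b (i + 1) i = C.ypt (bb (max (τ (i + 1)) (i + 1))) (i + 1) i
    rw [ypt, ypt, eqG]
  rw [h1]
  exact hbb _ i (lt_of_lt_of_le (Nat.lt_succ_self i) (le_max_right _ _))

theorem local_size {b : C.X} (hb : b ∈ C.Z) (n : ℕ) :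
    C.κ ≤ #((C.eF '' C.Z) ∩ cyl (C.eF b) (C.ylen b n) : Set C.X) := by
  by_contra hcon
  push_neg at hcon
  set c := #((C.eF '' C.Z) ∩ cyl (C.eF b) (C.ylen b n) : Set C.X) with hc
  obtain ⟨j₀, hj₀⟩ := C.hksup (2 ^ c) (C.hsl c hcon)
  set j := max n j₀ with hj
  have hcj : c < C.kap j :=
    lt_of_lt_of_le (lt_of_lt_of_le (Cardinal.cantor c) hj₀) (C.hmono (le_max_right n j₀))
  have hupd : ∀ α : C.S j, Function.update b j (α : C.R) ∈ C.Z := by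
    intro α k
    by_cases hk : k = j
    · subst hk; rw [Function.update_self]; exact α.2
    · rw [Function.update_of_ne hk]; exact hb k
  have hpre : ∀ α : C.S j, ∀ i < n, Function.update b j (α : C.R) i = b i := by
    intro α i hi
    have : i ≠ j := by
      intro hij
      rw [hij] at hi
      exact absurd hi (not_lt_of_ge (le_max_left n j₀))
    rw [Function.update_of_ne this]
  have hmem : ∀ α : C.S j,
      C.eF (Function.update b j (α : C.R)) ∈
        (C.eF '' C.Z) ∩ cyl (C.eF b) (C.ylen b n) := by
    intro α
    refine ⟨⟨_, hupd α, rfl⟩, ?_⟩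
    intro i hi
    have eqG : C.G (Function.update b j (α : C.R)) n = C.G b n := C.G_prefix (hpre α)
    have hlen : C.ylen (Function.update b j (α : C.R)) n = C.ylen b n := by
      rw [ylen, ylen, eqG]
    have h1 : C.eF (Function.update b j (α : C.R)) i = C.ypt b n i := by
      have := C.eF_in_cyl (Function.update b j (α : C.R)) n i (by rw [hlen]; exact hi)
      rw [this]
      show C.ypt (Function.update b j (α : C.R)) n i = C.ypt b n i
      rw [ypt, ypt, eqG]
    have h2 : C.eF b i = C.ypt b n i := C.eF_in_cyl b n i hi
    rw [h1, h2]
  have hinj : Function.Injective (fun α : C.S j =>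
      (⟨C.eF (Function.update b j (α : C.R)), hmem α⟩ :
        ((C.eF '' C.Z) ∩ cyl (C.eF b) (C.ylen b n) : Set C.X))) := by
    intro α α' hαα
    have h1 : C.eF (Function.update b j (α : C.R)) = C.eF (Function.update b j (α' : C.R)) :=
      congrArg Subtype.val hαα
    have h2 := C.eF_injOn (hupd α) (hupd α') h1
    have h3 := congrFun h2 j
    rw [Function.update_self, Function.update_self] at h3
    exact Subtype.ext h3
  have : C.kap j ≤ c := by
    rw [← C.hS j]
    exact Cardinal.mk_le_of_injective hinj
  exact absurd (lt_of_le_of_lt this hcj) (lt_irrefl _)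

/-! #### The closed embedding of `κ^ω` into the product of the `S n` -/

theorem ordinalOf_lt (β : C.R) : ordinalOf β < C.κ.ord :=
  ((((Ordinal.ToType.mk (o := C.κ.ord))).symm β : Set.Iio C.κ.ord)).2

theorem ordinalOf_card_lt (β : C.R) : (ordinalOf β).card < C.κ :=
  Cardinal.lt_ord.mp (C.ordinalOf_lt β)

theorem ordinalOf_inj : Function.Injective (fun β : C.R => ordinalOf β) := by
  intro a b h
  have h2 : ((Ordinal.ToType.mk (o := C.κ.ord))).symm a = ((Ordinal.ToType.mk (o := C.κ.ord))).symm b :=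
    Subtype.ext h
  exact ((Ordinal.ToType.mk (o := C.κ.ord))).symm.injective h2

open scoped Classical in
/-- The level of an alphabet element. -/
def lvl (β : C.R) : ℕ := Nat.find (C.hksup _ (C.ordinalOf_card_lt β))

/-- The elements of level at most `m` (in terms of cardinality bound). -/
def Lle (m : ℕ) : Set C.R := {β | (ordinalOf β).card ≤ C.kap m}

open scoped Classical in
theorem lvl_mem (β : C.R) : β ∈ C.Lle (C.lvl β) :=
  Nat.find_spec (C.hksup _ (C.ordinalOf_card_lt β))

theorem mk_Lle_lt (m : ℕ) : #(C.Lle m) < C.κ := by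
  have hinj : Function.Injective (fun β : C.Lle m =>
      (Ordinal.ToType.mk (o := (Order.succ (C.kap m)).ord))
        ⟨ordinalOf (β : C.R), by
          rw [Set.mem_Iio, Cardinal.lt_ord]
          exact lt_of_le_of_lt β.2 (Order.lt_succ _)⟩) := by
    intro a b h
    have h2 := ((Ordinal.ToType.mk (o := (Order.succ (C.kap m)).ord))).injective h
    have h3 := congrArg (Subtype.val : Set.Iio (Order.succ (C.kap m)).ord → Ordinal) h2
    exact Subtype.ext (C.ordinalOf_inj h3)
  have h1 : #(C.Lle m) ≤ Order.succ (C.kap m) := by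
    have h2 : #(C.Lle m) ≤ #((Order.succ (C.kap m)).ord.ToType) :=
      Cardinal.mk_le_of_injective hinj
    rwa [Cardinal.mk_toType, Cardinal.card_ord] at h2
  exact lt_of_le_of_lt (h1.trans (Order.succ_le_of_lt (Cardinal.cantor _)))
    (C.hsl _ (C.hkk m))

/-- The column position at which elements of level `m` are recorded. -/
def jm (m : ℕ) : ℕ := (C.hksup _ (C.mk_Lle_lt m)).choose + 1

theorem jm_ne_zero (m : ℕ) : C.jm m ≠ 0 := Nat.succ_ne_zero _

theorem mk_Lle_le {m k : ℕ} (h : C.jm m ≤ k) : #(C.Lle m) ≤ C.kap k :=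
  le_trans (C.hksup _ (C.mk_Lle_lt m)).choose_spec
    (C.hmono (le_trans (Nat.le_succ _) h))

theorem S_infinite (n : ℕ) : Infinite (C.S n) :=
  Cardinal.infinite_iff.mpr (by rw [C.hS n]; exact C.hk0 n)

/-- Numbering of some elements of `S n` by naturals. -/
def numS (n : ℕ) : ℕ ↪ C.S n := @Infinite.natEmbedding _ (C.S_infinite n)

/-- Embedding of the elements of level `m` into the alphabet set of the recording column. -/
def valInj (k m : ℕ) : C.Lle m ↪ C.S (Nat.pair k (C.jm m)) :=
  ((Cardinal.le_def _ _).mp (by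
    rw [C.hS]
    exact C.mk_Lle_le (Nat.right_le_pair k (C.jm m)))).some

/-- The content of column `k`, coding `β`. -/
def colfun (k : ℕ) (β : C.R) (j : ℕ) : C.R :=
  if j = 0 then (C.numS (Nat.pair k 0) (C.lvl β) : C.R)
  else if j = C.jm (C.lvl β) then (C.valInj k (C.lvl β) ⟨β, C.lvl_mem β⟩ : C.R)
  else (C.numS (Nat.pair k j) 0 : C.R)

theorem colfun_zero (k : ℕ) (β : C.R) :
    C.colfun k β 0 = (C.numS (Nat.pair k 0) (C.lvl β) : C.R) := by
  unfold colfun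
  rw [if_pos rfl]

theorem colfun_jm (k : ℕ) (β : C.R) :
    C.colfun k β (C.jm (C.lvl β)) = (C.valInj k (C.lvl β) ⟨β, C.lvl_mem β⟩ : C.R) := by
  unfold colfun
  rw [if_neg (C.jm_ne_zero _), if_pos rfl]

theorem colfun_jm' (k : ℕ) (γ : C.R) (m : ℕ) (h : C.lvl γ = m) :
    ∃ hγ : γ ∈ C.Lle m, C.colfun k γ (C.jm m) = (C.valInj k m ⟨γ, hγ⟩ : C.R) := by
  subst h
  exact ⟨C.lvl_mem γ, C.colfun_jm k γ⟩

/-- The closed embedding of the full Baire space into the product of the `S n`. -/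
def e1 (x : C.X) : C.X := fun i => C.colfun i.unpair.1 (x i.unpair.1) i.unpair.2

theorem e1_pair (x : C.X) (k j : ℕ) : C.e1 x (Nat.pair k j) = C.colfun k (x k) j := by
  show C.colfun (Nat.pair k j).unpair.1 (x (Nat.pair k j).unpair.1) (Nat.pair k j).unpair.2 =
    C.colfun k (x k) j
  rw [Nat.unpair_pair]

theorem colfun_mem (k : ℕ) (β : C.R) (j : ℕ) : C.colfun k β j ∈ C.S (Nat.pair k j) := by
  unfold colfun
  by_cases h0 : j = 0
  · subst h0
    rw [if_pos rfl]
    exact (C.numS (Nat.pair k 0) (C.lvl β)).2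
  · rw [if_neg h0]
    by_cases hj : j = C.jm (C.lvl β)
    · rw [if_pos hj]
      subst hj
      exact (C.valInj k (C.lvl β) ⟨β, C.lvl_mem β⟩).2
    · rw [if_neg hj]
      exact (C.numS (Nat.pair k j) 0).2

theorem e1_mem_Z (x : C.X) : C.e1 x ∈ C.Z := by
  intro i
  have := C.colfun_mem i.unpair.1 (x i.unpair.1) i.unpair.2
  rwa [Nat.pair_unpair] at this

theorem e1_recov (x x' : C.X) (k : ℕ)
    (h0 : C.e1 x' (Nat.pair k 0) = C.e1 x (Nat.pair k 0))
    (h1 : C.e1 x' (Nat.pair k (C.jm (C.lvl (x k)))) =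
      C.e1 x (Nat.pair k (C.jm (C.lvl (x k))))) :
    x' k = x k := by
  rw [C.e1_pair, C.e1_pair] at h0 h1
  rw [C.colfun_zero, C.colfun_zero] at h0
  have hl : C.lvl (x' k) = C.lvl (x k) :=
    (C.numS (Nat.pair k 0)).injective (Subtype.coe_injective h0)
  obtain ⟨hmem, heq⟩ := C.colfun_jm' k (x' k) (C.lvl (x k)) hl
  obtain ⟨hmem2, heq2⟩ := C.colfun_jm' k (x k) (C.lvl (x k)) rfl
  rw [heq, heq2] at h1
  have h3 := (C.valInj k (C.lvl (x k))).injective (Subtype.coe_injective h1)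
  exact congrArg Subtype.val h3

theorem e1_cont : Continuous C.e1 := by
  apply continuous_pi
  intro i
  have : (fun x : C.X => C.e1 x i) =
      (fun β : C.R => C.colfun i.unpair.1 β i.unpair.2) ∘ (fun x : C.X => x i.unpair.1) := rfl
  rw [this]
  exact continuous_of_discreteTopology.comp (continuous_apply _)

/-- The "consistent column" sets. -/
def Col (k : ℕ) : Set C.X := {z | ∃ β : C.R, ∀ j, z (Nat.pair k j) = C.colfun k β j}

theorem range_e1_eq : Set.range C.e1 = ⋂ k, C.Col k := by
  ext z
  constructor
  · rintro ⟨x, rfl⟩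
    exact mem_iInter.mpr (fun k => ⟨x k, fun j => C.e1_pair x k j⟩)
  · intro hz
    have h := mem_iInter.mp hz
    choose βf hβf using h
    refine ⟨βf, ?_⟩
    funext i
    have h2 := hβf i.unpair.1 i.unpair.2
    rw [Nat.pair_unpair] at h2
    exact h2.symm

theorem isOpen_coord (c : ℕ) (v : C.R) : IsOpen {w : C.X | w c = v} := by
  have : {w : C.X | w c = v} = (fun w : C.X => w c) ⁻¹' {v} := rfl
  rw [this]
  exact (continuous_apply c).isOpen_preimage _ (isOpen_discrete _)

theorem isClosed_Col (k : ℕ) : IsClosed (C.Col k) := by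
  rw [← isOpen_compl_iff, isOpen_iff_forall_mem_open]
  intro z hz
  have hz' : ∀ β : C.R, ∃ j, z (Nat.pair k j) ≠ C.colfun k β j := by
    intro β
    by_contra hcon
    push_neg at hcon
    exact hz ⟨β, hcon⟩
  by_cases hA : ∃ t : ℕ, (C.numS (Nat.pair k 0) t : C.R) = z (Nat.pair k 0)
  · obtain ⟨t, ht⟩ := hA
    by_cases hB : ∃ β₀ : C.Lle t, C.lvl (β₀ : C.R) = t ∧
        (C.valInj k t β₀ : C.R) = z (Nat.pair k (C.jm t))
    · obtain ⟨β₀, hβ₀l, hβ₀v⟩ := hB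
      obtain ⟨js, hjs⟩ := hz' (β₀ : C.R)
      refine ⟨{w : C.X | w (Nat.pair k 0) = z (Nat.pair k 0)} ∩
        ({w : C.X | w (Nat.pair k (C.jm t)) = z (Nat.pair k (C.jm t))} ∩
          {w : C.X | w (Nat.pair k js) = z (Nat.pair k js)}), ?_, ?_, rfl, rfl, rfl⟩
      · rintro w ⟨hw0, hwj, hws⟩
        rw [mem_compl_iff]
        rintro ⟨β, hβ⟩
        have hnums : (C.numS (Nat.pair k 0) (C.lvl β) : C.R) =
            (C.numS (Nat.pair k 0) t : C.R) := by
          rw [← C.colfun_zero k β, ← hβ 0]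
          rw [show w (Nat.pair k 0) = z (Nat.pair k 0) from hw0, ← ht]
        have hlv : C.lvl β = t :=
          (C.numS (Nat.pair k 0)).injective (Subtype.coe_injective hnums)
        obtain ⟨hmem, heq⟩ := C.colfun_jm' k β t hlv
        have hval : (C.valInj k t ⟨β, hmem⟩ : C.R) = z (Nat.pair k (C.jm t)) := by
          rw [← heq, ← hβ (C.jm t)]
          exact hwj
        have h5 : (⟨β, hmem⟩ : C.Lle t) = β₀ :=
          (C.valInj k t).injective (Subtype.coe_injective (hval.trans hβ₀v.symm))
        have hββ₀ : β = (β₀ : C.R) := congrArg Subtype.val h5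
        apply hjs
        rw [← hββ₀, ← hβ js]
        exact hws.symm
      · exact (C.isOpen_coord _ _).inter ((C.isOpen_coord _ _).inter (C.isOpen_coord _ _))
    · refine ⟨{w : C.X | w (Nat.pair k 0) = z (Nat.pair k 0)} ∩
        {w : C.X | w (Nat.pair k (C.jm t)) = z (Nat.pair k (C.jm t))}, ?_, ?_, rfl, rfl⟩
      · rintro w ⟨hw0, hwj⟩
        rw [mem_compl_iff]
        rintro ⟨β, hβ⟩
        have hnums : (C.numS (Nat.pair k 0) (C.lvl β) : C.R) =
            (C.numS (Nat.pair k 0) t : C.R) := by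
          rw [← C.colfun_zero k β, ← hβ 0]
          rw [show w (Nat.pair k 0) = z (Nat.pair k 0) from hw0, ← ht]
        have hlv : C.lvl β = t :=
          (C.numS (Nat.pair k 0)).injective (Subtype.coe_injective hnums)
        obtain ⟨hmem, heq⟩ := C.colfun_jm' k β t hlv
        apply hB
        refine ⟨⟨β, hmem⟩, hlv, ?_⟩
        rw [← heq, ← hβ (C.jm t)]
        exact hwj
      · exact (C.isOpen_coord _ _).inter (C.isOpen_coord _ _)
  · refine ⟨{w : C.X | w (Nat.pair k 0) = z (Nat.pair k 0)}, ?_, C.isOpen_coord _ _, rfl⟩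
    intro w hw
    rw [mem_compl_iff]
    rintro ⟨β, hβ⟩
    apply hA
    refine ⟨C.lvl β, ?_⟩
    rw [← C.colfun_zero k β, ← hβ 0]
    exact hw

theorem e1_closed : IsClosed (Set.range C.e1) := by
  rw [C.range_e1_eq]
  exact isClosed_iInter (fun k => C.isClosed_Col k)

/-! #### The composite embedding -/

/-- The composite of the closed coding embedding with the scheme branch map. -/
def E : C.X → C.X := fun x => C.eF (C.e1 x)

theorem E_recov (x : C.X) (n : ℕ) :
    ∃ m, ∀ x', (∀ i < m, C.E x' i = C.E x i) → ∀ i < n, x' i = x i := by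
  set n₁ := (Finset.range n).sup
    (fun k => max (Nat.pair k 0) (Nat.pair k (C.jm (C.lvl (x k))))) + 1 with hn₁
  refine ⟨C.ylen (C.e1 x) n₁, ?_⟩
  intro x' hx'
  have hcyl : C.eF (C.e1 x') ∈ cyl (C.eF (C.e1 x)) (C.ylen (C.e1 x) n₁) :=
    fun i hi => hx' i hi
  have hpre := C.recov (C.e1_mem_Z x) (C.e1_mem_Z x') hcyl
  intro k hk
  have hk' : k ∈ Finset.range n := Finset.mem_range.mpr hk
  have h0 : C.e1 x' (Nat.pair k 0) = C.e1 x (Nat.pair k 0) := by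
    apply hpre
    exact Nat.lt_succ_of_le (le_trans (le_max_left _ _)
      (Finset.le_sup (f := fun k => max (Nat.pair k 0)
        (Nat.pair k (C.jm (C.lvl (x k))))) hk'))
  have h1 : C.e1 x' (Nat.pair k (C.jm (C.lvl (x k)))) =
      C.e1 x (Nat.pair k (C.jm (C.lvl (x k)))) := by
    apply hpre
    exact Nat.lt_succ_of_le (le_trans (le_max_right _ _)
      (Finset.le_sup (f := fun k => max (Nat.pair k 0)
        (Nat.pair k (C.jm (C.lvl (x k))))) hk'))
  exact C.e1_recov x x' k h0 h1

theorem E_cont : Continuous C.E := C.eF_cont.comp C.e1_cont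

theorem E_inj : Function.Injective C.E := by
  intro x x' h
  funext k
  obtain ⟨m, hm⟩ := C.E_recov x (k + 1)
  exact (hm x' (fun i _ => congrFun h.symm i) k (Nat.lt_succ_self k)).symm

theorem E_embedding : Topology.IsEmbedding C.E := by
  refine ⟨Topology.isInducing_iff_nhds.mpr ?_, C.E_inj⟩
  intro x
  apply le_antisymm
  · exact Filter.tendsto_iff_comap.mp (C.E_cont.tendsto x)
  · intro U hU
    obtain ⟨V, hVU, hVopen, hxV⟩ := mem_nhds_iff.mp hU
    obtain ⟨n, hn⟩ := exists_cyl_subset hVopen hxV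
    obtain ⟨m, hm⟩ := C.E_recov x n
    rw [Filter.mem_comap]
    refine ⟨cyl (C.E x) m, (isOpen_cyl _ _).mem_nhds (mem_cyl_self _ _), ?_⟩
    intro x' hx'
    exact hVU (hn (fun i hi => hm x' (fun j hj => hx' j hj) i hi))

theorem E_range_sub : Set.range C.E ⊆ C.f '' C.W := by
  rintro y ⟨x, rfl⟩
  exact C.eF_mem (C.e1 x)

theorem E_range_closed : IsClosed (Set.range C.E) := by
  refine isClosed_of_closure_subset ?_
  intro y hy
  have hsub : Set.range C.E ⊆ C.eF '' C.Z := by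
    rintro _ ⟨x, rfl⟩
    exact ⟨C.e1 x, C.e1_mem_Z x, rfl⟩
  have h1 : y ∈ C.eF '' C.Z := C.closed_image.closure_subset (closure_mono hsub hy)
  obtain ⟨b, hbZ, rfl⟩ := h1
  have hbcl : b ∈ closure (Set.range C.e1) := by
    rw [mem_closure_iff]
    intro o ho hbo
    obtain ⟨n, hn⟩ := exists_cyl_subset ho hbo
    obtain ⟨w, hw1, hw2⟩ := mem_closure_iff.mp hy (cyl (C.eF b) (C.ylen b n))
      (isOpen_cyl _ _) (mem_cyl_self _ _)
    obtain ⟨x, rfl⟩ := hw2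
    have hrec := C.recov hbZ (C.e1_mem_Z x) (fun i hi => hw1 i hi)
    exact ⟨C.e1 x, hn (fun i hi => hrec i hi), ⟨x, rfl⟩⟩
  rw [C.e1_closed.closure_eq] at hbcl
  obtain ⟨x, rfl⟩ := hbcl
  exact ⟨x, rfl⟩

/-! #### The perfect image -/

theorem image_perfect : IsKappaPerfect C.κ (C.eF '' C.Z) := by
  refine ⟨⟨C.eF C.Z_nonempty.choose, ⟨_, C.Z_nonempty.choose_spec, rfl⟩⟩, C.closed_image, ?_⟩
  intro x hx U hUopen hxU
  obtain ⟨b, hbZ, rfl⟩ := hx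
  obtain ⟨M, hM⟩ := exists_cyl_subset hUopen hxU
  have hsub : (C.eF '' C.Z) ∩ cyl (C.eF b) (C.ylen b M) ⊆ (C.eF '' C.Z) ∩ U := by
    intro w hw
    exact ⟨hw.1, hM (cyl_antitone (C.le_ylen b M) hw.2)⟩
  exact le_trans (C.local_size hbZ M) (Cardinal.mk_le_mk_of_subset hsub)

end Ctx

/-! #### Existence of the cardinal ladder -/

theorem exists_kapS (κ : Cardinal.{u}) (huncount : ℵ₀ < κ) (hcof : κ.ord.cof = ℵ₀) :
    ∃ kap : ℕ → Cardinal.{u}, Monotone kap ∧ (∀ n, ℵ₀ ≤ kap n) ∧ (∀ n, kap n < κ) ∧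
      (∀ c, c < κ → ∃ n, c ≤ kap n) := by
  obtain ⟨ι, g, hlsub, hmk⟩ := Ordinal.exists_lsub_cof κ.ord
  rw [hcof] at hmk
  have hcnt : Countable ι := Cardinal.mk_le_aleph0_iff.mp hmk.le
  have hne : Nonempty ι := by
    rw [← Cardinal.mk_ne_zero_iff, hmk]
    exact Cardinal.aleph0_ne_zero
  obtain ⟨sf, hsf⟩ := exists_surjective_nat ι
  set g' : ℕ → Cardinal.{u} := fun n => (g (sf n)).card with hg'
  let kap : ℕ → Cardinal.{u} :=
    fun n => Nat.rec (ℵ₀ ⊔ g' 0) (fun n c => c ⊔ (ℵ₀ ⊔ g' (n + 1))) n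
  have hstep : ∀ n, kap (n + 1) = kap n ⊔ (ℵ₀ ⊔ g' (n + 1)) := fun n => rfl
  have hmono : Monotone kap :=
    monotone_nat_of_le_succ (fun n => by rw [hstep]; exact le_sup_left)
  have hk0 : ∀ n, ℵ₀ ≤ kap n := by
    intro n
    induction n with
    | zero => exact le_sup_left
    | succ n ih => rw [hstep]; exact le_trans ih le_sup_left
  have hg'lt : ∀ n, g' n < κ := by
    intro n
    have hlt : g (sf n) < κ.ord := by
      rw [← hlsub]
      exact Ordinal.lt_lsub g (sf n)
    exact Cardinal.lt_ord.mp hlt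
  have hkk : ∀ n, kap n < κ := by
    intro n
    induction n with
    | zero => exact sup_lt_iff.mpr ⟨huncount, hg'lt 0⟩
    | succ n ih =>
      rw [hstep]
      exact sup_lt_iff.mpr ⟨ih, sup_lt_iff.mpr ⟨huncount, hg'lt (n + 1)⟩⟩
  have hg'le : ∀ n, g' n ≤ kap n := by
    intro n
    cases n with
    | zero => exact le_sup_right
    | succ n => rw [hstep]; exact le_trans le_sup_right le_sup_right
  refine ⟨kap, hmono, hk0, hkk, ?_⟩
  intro c hc
  have hcord : c.ord < κ.ord := Cardinal.ord_lt_ord.mpr hc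
  rw [← hlsub] at hcord
  obtain ⟨i, hi⟩ := Ordinal.lt_lsub_iff.mp hcord
  obtain ⟨n, rfl⟩ := hsf i
  refine ⟨n, ?_⟩
  calc c = c.ord.card := (Cardinal.card_ord c).symm
    _ ≤ (g (sf n)).card := Ordinal.card_le_card hi
    _ ≤ kap n := hg'le n

/-! #### The three implications -/

theorem imp23 (κ : Cardinal.{u}) (huncount : ℵ₀ < κ)
    (hsl : ∀ c < κ, 2 ^ c < κ) (hcof : κ.ord.cof = ℵ₀)
    (A : Set (ℕ → κ.ord.ToType))
    (h : ∃ ι : (ℕ → κ.ord.ToType) → (ℕ → κ.ord.ToType),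
      Continuous ι ∧ Function.Injective ι ∧ Set.range ι ⊆ A) :
    ∃ P ⊆ A, IsKappaPerfect κ P := by
  obtain ⟨ι, hc, hi, hr⟩ := h
  obtain ⟨kap, hmono, hk0, hkk, hksup⟩ := exists_kapS κ huncount hcof
  have hSex : ∀ n, ∃ p : Set κ.ord.ToType, #p = kap n := by
    intro n
    apply Cardinal.le_mk_iff_exists_set.mp
    rw [Cardinal.mk_toType, Cardinal.card_ord]
    exact (hkk n).le
  choose S hS using hSex
  have hRne : Nonempty κ.ord.ToType := by
    rw [← Cardinal.mk_ne_zero_iff, Cardinal.mk_toType, Cardinal.card_ord]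
    exact ne_of_gt (lt_trans Cardinal.aleph0_pos huncount)
  let C : Ctx.{u} :=
    { κ := κ, huncount := huncount, hsl := hsl,
      kap := kap, hmono := hmono, hk0 := hk0, hkk := hkk, hksup := hksup,
      S := S, hS := hS,
      W := Set.univ, hWne := ⟨fun _ => hRne.some, trivial⟩, hWcl := isClosed_univ,
      f := ι, hf := hc,
      hbig := by
        intro y m _
        rw [Set.univ_inter, Cardinal.mk_image_eq hi]
        apply kappa_le_mk_cyl _ y m
        rw [Cardinal.mk_toType, Cardinal.card_ord] }
  refine ⟨C.eF '' C.Z, ?_, C.image_perfect⟩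
  intro w hw
  obtain ⟨b, hbZ, rfl⟩ := hw
  have hmem := C.eF_mem b
  apply hr
  rw [← Set.image_univ]
  exact hmem

theorem imp31 (κ : Cardinal.{u}) (huncount : ℵ₀ < κ)
    (hsl : ∀ c < κ, 2 ^ c < κ) (hcof : κ.ord.cof = ℵ₀)
    (A : Set (ℕ → κ.ord.ToType))
    (h : ∃ P ⊆ A, IsKappaPerfect κ P) :
    ∃ ι : (ℕ → κ.ord.ToType) → (ℕ → κ.ord.ToType),
      Topology.IsEmbedding ι ∧ IsClosed (Set.range ι) ∧ Set.range ι ⊆ A := by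
  obtain ⟨P, hPA, hPne, hPcl, hPloc⟩ := h
  obtain ⟨kap, hmono, hk0, hkk, hksup⟩ := exists_kapS κ huncount hcof
  have hSex : ∀ n, ∃ p : Set κ.ord.ToType, #p = kap n := by
    intro n
    apply Cardinal.le_mk_iff_exists_set.mp
    rw [Cardinal.mk_toType, Cardinal.card_ord]
    exact (hkk n).le
  choose S hS using hSex
  let C : Ctx.{u} :=
    { κ := κ, huncount := huncount, hsl := hsl,
      kap := kap, hmono := hmono, hk0 := hk0, hkk := hkk, hksup := hksup,
      S := S, hS := hS,
      W := P, hWne := hPne, hWcl := hPcl,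
      f := id, hf := continuous_id,
      hbig := by
        intro y m hne
        rw [Set.image_id]
        obtain ⟨x, hxP, hxcyl⟩ := hne
        exact hPloc x hxP (cyl y m) (isOpen_cyl y m) hxcyl }
  refine ⟨C.E, C.E_embedding, C.E_range_closed, ?_⟩
  intro w hw
  have h2 := C.E_range_sub hw
  rw [Set.image_id] at h2
  exact hPA h2

theorem imp12 {κ : Cardinal.{u}} (A : Set (ℕ → κ.ord.ToType))
    (h : ∃ ι : (ℕ → κ.ord.ToType) → (ℕ → κ.ord.ToType),
      Topology.IsEmbedding ι ∧ IsClosed (Set.range ι) ∧ Set.range ι ⊆ A) :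
    ∃ ι : (ℕ → κ.ord.ToType) → (ℕ → κ.ord.ToType),
      Continuous ι ∧ Function.Injective ι ∧ Set.range ι ⊆ A := by
  obtain ⟨ι, he, _, hr⟩ := h
  exact ⟨ι, he.continuous, he.injective, hr⟩

end KPSP


/-- For κ an uncountable strong limit cardinal of countable cofinality and any A ⊆ κ^ω,
the three formulations of the κ-PSP (via a topological embedding of κ^ω with closed
range inside A, via a continuous injection of κ^ω into A, and via a κ-perfect subset
of A) are equivalent. -/
theorem kappa_psp_equivalences
    (κ : Cardinal)
    (huncount : ℵ₀ < κ)
    (hsl : ∀ c < κ, 2 ^ c < κ)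
    (hcof : κ.ord.cof = ℵ₀)
    (A : Set (ℕ → κ.ord.ToType)) :
    ((#A ≤ κ ∨ ∃ ι : (ℕ → κ.ord.ToType) → (ℕ → κ.ord.ToType),
        Topology.IsEmbedding ι ∧ IsClosed (Set.range ι) ∧ Set.range ι ⊆ A) ↔
      (#A ≤ κ ∨ ∃ ι : (ℕ → κ.ord.ToType) → (ℕ → κ.ord.ToType),
        Continuous ι ∧ Function.Injective ι ∧ Set.range ι ⊆ A)) ∧
    ((#A ≤ κ ∨ ∃ ι : (ℕ → κ.ord.ToType) → (ℕ → κ.ord.ToType),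
        Continuous ι ∧ Function.Injective ι ∧ Set.range ι ⊆ A) ↔
      (#A ≤ κ ∨ ∃ P ⊆ A, IsKappaPerfect κ P)) := by
  constructor
  · constructor
    · exact Or.imp_right (KPSP.imp12 A)
    · exact Or.imp_right (fun h =>
        KPSP.imp31 κ huncount hsl hcof A (KPSP.imp23 κ huncount hsl hcof A h))
  · constructor
    · exact Or.imp_right (KPSP.imp23 κ huncount hsl hcof A)
    · exact Or.imp_right (fun h =>
        KPSP.imp12 A (KPSP.imp31 κ huncount hsl hcof A h))
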